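/- Let f(x,y) = ∏_{k=1}^n (x² + y² − k²)/(x² + y² + 1). Then Hess f(x,y) = 4 s(x,y) t(x,y)/(x² + y² + 1)^{2n+3}, where s(x,y) = Σ_{j=1}^n (j²+1) ∏_{i≠j}(x² + y² − i²) and t(x,y) = (1 − 3x² − 3y²) Σ_{j=1}^n (j²+1) ∏_{i≠j}(x²+y²−i²) + 2(x²+y²) Σ_{j=1}^n (j²+1) Σ_{l≠j} (l²+1) ∏_{k≠j,l}(x²+y²−k²). -/

import Mathlib

/-!
Write f = g(x² + y²) with g(u) = ∏ₖ (u − k²)/(u + 1). For a radial function the chain rule gives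
f_xx = 4x²g'' + 2g', f_yy = 4y²g'' + 2g', f_xy = 4xy g'', hence Hess f = 4g'(g' + 2u g'') at
u = x² + y². Each factor has derivative (k² + 1)/(u + 1)², so by the product rule g' and g'' are
sums over the products with one, resp. two, factors removed; clearing the powers of u + 1 turns
them into s/(u + 1)^{n+1} and (t' − 2s)/(u + 1)^{n+2}, where t' is the double sum in t.
-/

noncomputable def Hess (f : ℝ → ℝ → ℝ) (x y : ℝ) : ℝ :=
  deriv (fun t => deriv (fun s => f s y) t) x *
    deriv (fun t => deriv (fun s => f x s) t) y -
    (deriv (fun t => deriv (fun s => f s t) x) y) ^ 2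

open Finset

theorem hasDerivAt_comp_sq_add {h h' : ℝ → ℝ} (hh : ∀ u, 0 ≤ u → HasDerivAt h (h' u) u)
    {c : ℝ} (hc : 0 ≤ c) (t : ℝ) :
    HasDerivAt (fun s => h (s ^ 2 + c)) (h' (t ^ 2 + c) * (2 * t)) t := by
  have hsq : HasDerivAt (fun s : ℝ => s ^ 2 + c) (2 * t) t := by
    simpa using (hasDerivAt_pow 2 t).add_const c
  exact (hh _ (by positivity)).comp t hsq

theorem hasDerivAt_comp_add_sq {h h' : ℝ → ℝ} (hh : ∀ u, 0 ≤ u → HasDerivAt h (h' u) u)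
    {c : ℝ} (hc : 0 ≤ c) (t : ℝ) :
    HasDerivAt (fun s => h (c + s ^ 2)) (h' (c + t ^ 2) * (2 * t)) t := by
  simpa only [add_comm c] using hasDerivAt_comp_sq_add hh hc t

theorem hess_comp_sq_add_sq {g g' g'' : ℝ → ℝ} (hg : ∀ u, 0 ≤ u → HasDerivAt g (g' u) u)
    (hg' : ∀ u, 0 ≤ u → HasDerivAt g' (g'' u) u) (x y : ℝ) :
    Hess (fun x y => g (x ^ 2 + y ^ 2)) x y =
      4 * g' (x ^ 2 + y ^ 2) *
        (g' (x ^ 2 + y ^ 2) + 2 * (x ^ 2 + y ^ 2) * g'' (x ^ 2 + y ^ 2)) := by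
  have fx : ∀ b, deriv (fun s => g (s ^ 2 + b ^ 2)) = fun t => g' (t ^ 2 + b ^ 2) * (2 * t) :=
    fun b => funext fun t => (hasDerivAt_comp_sq_add hg (sq_nonneg b) t).deriv
  have fy : deriv (fun s => g (x ^ 2 + s ^ 2)) = fun t => g' (x ^ 2 + t ^ 2) * (2 * t) :=
    funext fun t => (hasDerivAt_comp_add_sq hg (sq_nonneg x) t).deriv
  have fxx := ((hasDerivAt_comp_sq_add hg' (sq_nonneg y) x).fun_mul
    ((hasDerivAt_id' x).const_mul 2)).deriv
  have fyy := ((hasDerivAt_comp_add_sq hg' (sq_nonneg x) y).fun_mul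
    ((hasDerivAt_id' y).const_mul 2)).deriv
  have fxy := ((hasDerivAt_comp_add_sq hg' (sq_nonneg x) y).mul_const (2 * x)).deriv
  simp only [Hess, fx, fy, fxx, fyy, fxy]
  ring

section RatioProd

variable {ι : Type*} (a : ι → ℝ)

noncomputable def ratioProd (s : Finset ι) (u : ℝ) : ℝ := ∏ k ∈ s, (u - a k) / (u + 1)

theorem ratioProd_mul_pow_card (s : Finset ι) {u : ℝ} (hu : u + 1 ≠ 0) :
    ratioProd a s u * (u + 1) ^ s.card = ∏ k ∈ s, (u - a k) := by
  rw [ratioProd, prod_div_distrib, prod_const, div_mul_cancel₀ _ (pow_ne_zero _ hu)]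

variable [DecidableEq ι]

noncomputable def erasureSum (s : Finset ι) (u : ℝ) : ℝ :=
  ∑ j ∈ s, (a j + 1) * ratioProd a (s.erase j) u

theorem hasDerivAt_sub_div_add_one (b : ℝ) {u : ℝ} (hu : u + 1 ≠ 0) :
    HasDerivAt (fun v => (v - b) / (v + 1)) ((b + 1) / (u + 1) ^ 2) u := by
  refine (((hasDerivAt_id' u).sub_const b).fun_div ((hasDerivAt_id' u).add_const 1)
    hu).congr_deriv ?_
  ring

theorem hasDerivAt_ratioProd (s : Finset ι) {u : ℝ} (hu : u + 1 ≠ 0) :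
    HasDerivAt (ratioProd a s) (erasureSum a s u / (u + 1) ^ 2) u := by
  refine (HasDerivAt.fun_finsetProd (u := s) fun k _ =>
    hasDerivAt_sub_div_add_one (a k) hu).congr_deriv ?_
  simp only [erasureSum, ratioProd, sum_div, smul_eq_mul]
  exact sum_congr rfl fun j _ => by ring

theorem hasDerivAt_erasureSum (s : Finset ι) {u : ℝ} (hu : u + 1 ≠ 0) :
    HasDerivAt (erasureSum a s)
      ((∑ j ∈ s, (a j + 1) * erasureSum a (s.erase j) u) / (u + 1) ^ 2) u := by
  rw [sum_div]
  refine HasDerivAt.fun_sum fun j _ => ?_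
  simpa only [mul_div_assoc] using (hasDerivAt_ratioProd a (s.erase j) hu).const_mul (a j + 1)

theorem hasDerivAt_erasureSum_div_sq (s : Finset ι) {u : ℝ} (hu : u + 1 ≠ 0) :
    HasDerivAt (fun v => erasureSum a s v / (v + 1) ^ 2)
      ((∑ j ∈ s, (a j + 1) * erasureSum a (s.erase j) u) / (u + 1) ^ 4 -
        2 * erasureSum a s u / (u + 1) ^ 3) u := by
  have hsq : HasDerivAt (fun v : ℝ => (v + 1) ^ 2) (2 * (u + 1)) u := by
    simpa using ((hasDerivAt_id u).add_const 1).fun_pow 2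
  refine ((hasDerivAt_erasureSum a s hu).fun_div hsq (pow_ne_zero 2 hu)).congr_deriv ?_
  field_simp

theorem erasureSum_mul_pow_card (s : Finset ι) {u : ℝ} (hu : u + 1 ≠ 0) :
    erasureSum a s u * (u + 1) ^ s.card =
      (u + 1) * ∑ j ∈ s, (a j + 1) * ∏ k ∈ s.erase j, (u - a k) := by
  rw [erasureSum, sum_mul, mul_sum]
  refine sum_congr rfl fun j hj => ?_
  rw [← card_erase_add_one hj, ← ratioProd_mul_pow_card a _ hu]
  ring

theorem sum_erasureSum_mul_pow_card (s : Finset ι) {u : ℝ} (hu : u + 1 ≠ 0) :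
    (∑ j ∈ s, (a j + 1) * erasureSum a (s.erase j) u) * (u + 1) ^ s.card =
      (u + 1) ^ 2 * ∑ j ∈ s, (a j + 1) *
        ∑ l ∈ s.erase j, (a l + 1) * ∏ k ∈ (s.erase j).erase l, (u - a k) := by
  rw [sum_mul, mul_sum]
  refine sum_congr rfl fun j hj => ?_
  rw [← card_erase_add_one hj, pow_succ, ← mul_assoc, mul_assoc (a j + 1),
    erasureSum_mul_pow_card a _ hu]
  ring

end RatioProd

open Finset in
theorem hessian_rational_product_circles_odd_general
    (n : ℕ) (f : ℝ → ℝ → ℝ)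
    (hf : ∀ x y, f x y = ∏ k ∈ Icc 1 n,
      ((x ^ 2 + y ^ 2 - (k : ℝ) ^ 2) / (x ^ 2 + y ^ 2 + 1))) :
    ∀ x y, Hess f x y =
      4 * (∑ j ∈ Icc 1 n, ((j : ℝ) ^ 2 + 1) *
            ∏ i ∈ (Icc 1 n).erase j, (x ^ 2 + y ^ 2 - (i : ℝ) ^ 2)) *
        ((1 - 3 * x ^ 2 - 3 * y ^ 2) *
            (∑ j ∈ Icc 1 n, ((j : ℝ) ^ 2 + 1) *
              ∏ i ∈ (Icc 1 n).erase j, (x ^ 2 + y ^ 2 - (i : ℝ) ^ 2)) +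
          2 * (x ^ 2 + y ^ 2) *
            ∑ j ∈ Icc 1 n, ((j : ℝ) ^ 2 + 1) *
              ∑ l ∈ (Icc 1 n).erase j, ((l : ℝ) ^ 2 + 1) *
                ∏ k ∈ ((Icc 1 n).erase j).erase l,
                  (x ^ 2 + y ^ 2 - (k : ℝ) ^ 2)) /
        (x ^ 2 + y ^ 2 + 1) ^ (2 * n + 3) := by
  intro x y
  obtain rfl : f = fun x y => ratioProd (fun k : ℕ => (k : ℝ) ^ 2) (Icc 1 n) (x ^ 2 + y ^ 2) :=
    funext fun x => funext fun y => hf x y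
  have hne : ∀ u : ℝ, 0 ≤ u → u + 1 ≠ 0 := fun u hu => by positivity
  rw [hess_comp_sq_add_sq (fun u hu => hasDerivAt_ratioProd _ _ (hne u hu))
    (fun u hu => hasDerivAt_erasureSum_div_sq _ _ (hne u hu))]
  have hu := hne (x ^ 2 + y ^ 2) (by positivity)
  have hS := erasureSum_mul_pow_card (fun k : ℕ => (k : ℝ) ^ 2) (Icc 1 n) hu
  have hT := sum_erasureSum_mul_pow_card (fun k : ℕ => (k : ℝ) ^ 2) (Icc 1 n) hu
  simp only [Nat.card_Icc, Nat.add_sub_cancel] at hS hT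
  rw [← eq_div_iff (pow_ne_zero _ hu)] at hS hT
  rw [hS, hT]
  field_simp
  ring

open Finset in
theorem hessian_rational_product_circles_odd
    (n : ℕ) (hn : 1 ≤ n) (f : ℝ → ℝ → ℝ)
    (hf : ∀ x y, f x y = ∏ k ∈ Icc 1 n,
      ((x ^ 2 + y ^ 2 - (k : ℝ) ^ 2) / (x ^ 2 + y ^ 2 + 1))) :
    ∀ x y, Hess f x y =
      4 * (∑ j ∈ Icc 1 n, ((j : ℝ) ^ 2 + 1) *
            ∏ i ∈ (Icc 1 n).erase j, (x ^ 2 + y ^ 2 - (i : ℝ) ^ 2)) *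
        ((1 - 3 * x ^ 2 - 3 * y ^ 2) *
            (∑ j ∈ Icc 1 n, ((j : ℝ) ^ 2 + 1) *
              ∏ i ∈ (Icc 1 n).erase j, (x ^ 2 + y ^ 2 - (i : ℝ) ^ 2)) +
          2 * (x ^ 2 + y ^ 2) *
            ∑ j ∈ Icc 1 n, ((j : ℝ) ^ 2 + 1) *
              ∑ l ∈ (Icc 1 n).erase j, ((l : ℝ) ^ 2 + 1) *
                ∏ k ∈ ((Icc 1 n).erase j).erase l,
                  (x ^ 2 + y ^ 2 - (k : ℝ) ^ 2)) /
        (x ^ 2 + y ^ 2 + 1) ^ (2 * n + 3) :=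
  hessian_rational_product_circles_odd_general n f hf
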